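/- For any n ≥ 1 and pairwise distinct elements t_1, ..., t_n of a field, the sum over all permutations (i_1,...,i_n) of {1,...,n} of 1/((t_{i_2}-t_{i_1})(t_{i_3}-t_{i_2})···(t_{i_n}-t_{i_{n-1}})) equals 0 when n ≥ 2, and equals 1 when n = 1. -/

import Mathlib

/-!
Group the orderings by their first element `p`. For a fixed `p` the remaining factors form the
same sum over the orderings of the other nodes, weighted by `1/(t_{i_2} - t_p)`; by induction on
`n`, such a sum weighted by `1/(t_{i_1} - x)` is the partial fraction expansion of
`∏_a 1/(t_a - x)`. So the orderings starting at `p` contribute the Lagrange nodal weight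
`∏_{b ≠ p} 1/(t_b - t_p)`, and for `n ≥ 2` the nodal weights sum to zero: their sum is the
coefficient of `X^(n-1)` in the interpolant of the constant `1`.
-/

/-- The product of inverses of consecutive differences `∏_{s} 1/(t_{i_{s+1}} - t_{i_s})`
along a list `(i_1, ..., i_m)`. -/
def consecProd {n : ℕ} {K : Type*} [Field K] (t : Fin n → K) (l : List (Fin n)) : K :=
  ((l.zip l.tail).map fun p => (t p.2 - t p.1)⁻¹).prod

open Finset Equiv

namespace Lagrange

variable {F ι : Type*} [Field F] [DecidableEq ι] {s : Finset ι} {v : ι → F}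

theorem sum_nodalWeight_eq_zero (hvs : Set.InjOn v s) (hs : 2 ≤ #s) :
    ∑ i ∈ s, nodalWeight s v i = 0 := by
  have h := coeff_eq_sum hvs (P := 1) (by rw [Polynomial.degree_one]; exact_mod_cast (by omega))
  simp only [Polynomial.coeff_one, Polynomial.eval_one, one_div] at h
  rw [if_neg (by omega)] at h
  simp only [nodalWeight, prod_inv_distrib, h]

theorem sum_nodalWeight_mul_inv_sub (hvs : Set.InjOn v s) (hs : s.Nonempty) {x : F}
    (hx : ∀ i ∈ s, x ≠ v i) :
    ∑ i ∈ s, nodalWeight s v i * (x - v i)⁻¹ = (∏ i ∈ s, (x - v i))⁻¹ := by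
  have h := eval_interpolate_not_at_node 1 hx
  rw [interpolate_one hvs hs, Polynomial.eval_one, eval_nodal] at h
  simp only [Pi.one_apply, mul_one] at h
  exact eq_inv_of_mul_eq_one_right h.symm

theorem nodalWeight_neg (s : Finset ι) (v : ι → F) (i : ι) :
    nodalWeight s (-v) i = ∏ j ∈ s.erase i, (v j - v i)⁻¹ := by
  simp only [nodalWeight, Pi.neg_apply, neg_sub_neg]

end Lagrange

section consecProd

variable {K : Type*} [Field K]

@[simp]
theorem consecProd_singleton {n : ℕ} (t : Fin n → K) (a : Fin n) : consecProd t [a] = 1 := rfl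

theorem consecProd_cons_cons {n : ℕ} (t : Fin n → K) (a b : Fin n) (l : List (Fin n)) :
    consecProd t (a :: b :: l) = (t b - t a)⁻¹ * consecProd t (b :: l) := rfl

theorem consecProd_map {n m : ℕ} (t : Fin n → K) (g : Fin m → Fin n) (l : List (Fin m)) :
    consecProd t (l.map g) = consecProd (t ∘ g) l := by
  induction l with
  | nil => rfl
  | cons a l ih =>
    cases l with
    | nil => rfl
    | cons b l => simp only [List.map_cons, consecProd_cons_cons, ← ih, Function.comp_apply]

theorem consecProd_cons_map_finRange {n m : ℕ} (t : Fin n → K) (a : Fin n)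
    (g : Fin (m + 1) → Fin n) :
    consecProd t (a :: (List.finRange (m + 1)).map g) =
      (t (g 0) - t a)⁻¹ * consecProd (t ∘ g) (List.finRange (m + 1)) := by
  rw [List.finRange_succ, List.map_cons, consecProd_cons_cons, ← List.map_cons,
    ← List.finRange_succ, consecProd_map]

theorem sum_perm_fin_one_consecProd (t : Fin 1 → K) :
    ∑ σ : Perm (Fin 1), consecProd t ((List.finRange 1).map σ) = 1 := by
  simp [List.finRange_succ]

end consecProd

section decomposeFin

variable {m : ℕ}

theorem swap_zero_succ_injective (p : Fin (m + 2)) :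
    Function.Injective fun a : Fin (m + 1) => swap 0 p a.succ :=
  (swap 0 p).injective.comp (Fin.succ_injective _)

theorem swap_zero_succ_ne (p : Fin (m + 2)) (a : Fin (m + 1)) : swap 0 p a.succ ≠ p := by
  nth_rw 2 [← swap_apply_left 0 p]
  exact (swap 0 p).injective.ne a.succ_ne_zero

theorem prod_swap_zero_succ {M : Type*} [CommMonoid M] (p : Fin (m + 2)) (g : Fin (m + 2) → M) :
    ∏ a : Fin (m + 1), g (swap 0 p a.succ) = ∏ b ∈ univ.erase p, g b := by
  rw [← prod_image fun a _ b _ h => swap_zero_succ_injective p h]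
  congr 1
  ext b
  simp only [mem_image, mem_univ, true_and, mem_erase, and_true, ← eq_symm_apply, symm_swap,
    Fin.exists_succ_eq, Ne, swap_apply_left]

theorem map_finRange_decomposeFin_symm (p : Fin (m + 2)) (σ : Perm (Fin (m + 1))) :
    (List.finRange (m + 2)).map (Perm.decomposeFin.symm (p, σ)) =
      p :: (List.finRange (m + 1)).map fun i => swap 0 p (σ i).succ := by
  rw [List.finRange_succ, List.map_cons, List.map_map, Perm.decomposeFin_symm_apply_zero]
  congr 1
  exact List.map_congr_left fun i _ => Perm.decomposeFin_symm_apply_succ σ p i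

variable {K : Type*} [Field K]

theorem sum_consecProd_decomposeFin_symm (t : Fin (m + 2) → K) (p : Fin (m + 2)) :
    ∑ σ : Perm (Fin (m + 1)),
        consecProd t ((List.finRange (m + 2)).map (Perm.decomposeFin.symm (p, σ))) =
      ∑ σ : Perm (Fin (m + 1)), ((t ∘ fun a => swap 0 p a.succ) (σ 0) - t p)⁻¹ *
        consecProd (t ∘ fun a => swap 0 p a.succ) ((List.finRange (m + 1)).map σ) := by
  refine sum_congr rfl fun σ _ => ?_
  rw [map_finRange_decomposeFin_symm, consecProd_cons_map_finRange, consecProd_map]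
  rfl

end decomposeFin

section partialFractions

variable {K : Type*} [Field K]

theorem sum_consecProd_decomposeFin_symm_eq_nodalWeight {m : ℕ} (t : Fin (m + 2) → K)
    (ht : Function.Injective t) (p : Fin (m + 2))
    (hm : ∀ u : Fin (m + 1) → K, Function.Injective u → ∀ x, (∀ a, u a ≠ x) →
      ∑ σ : Perm (Fin (m + 1)),
          (u (σ 0) - x)⁻¹ * consecProd u ((List.finRange (m + 1)).map σ) =
        ∏ a, (u a - x)⁻¹) :
    ∑ σ : Perm (Fin (m + 1)),
        consecProd t ((List.finRange (m + 2)).map (Perm.decomposeFin.symm (p, σ))) =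
      Lagrange.nodalWeight univ (-t) p := by
  rw [sum_consecProd_decomposeFin_symm, hm _ (ht.comp (swap_zero_succ_injective p)) _
    fun a => ht.ne (swap_zero_succ_ne p a), Lagrange.nodalWeight_neg]
  exact prod_swap_zero_succ p fun b => (t b - t p)⁻¹

theorem sum_perm_inv_sub_mul_consecProd (m : ℕ) (t : Fin (m + 1) → K)
    (ht : Function.Injective t) (x : K) (hx : ∀ a, t a ≠ x) :
    ∑ σ : Perm (Fin (m + 1)),
        (t (σ 0) - x)⁻¹ * consecProd t ((List.finRange (m + 1)).map σ) =
      ∏ a, (t a - x)⁻¹ := by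
  induction m generalizing x with
  | zero => simp [List.finRange_succ]
  | succ m ih =>
    rw [← Perm.decomposeFin.symm.sum_comp, Fintype.sum_prod_type]
    simp only [Perm.decomposeFin_symm_apply_zero, ← mul_sum,
      sum_consecProd_decomposeFin_symm_eq_nodalWeight t ht _ ih]
    have hx' : ∀ a ∈ univ, -x ≠ (-t) a := fun a _ => neg_injective.ne (hx a).symm
    have h := Lagrange.sum_nodalWeight_mul_inv_sub (v := -t) (neg_injective.comp ht).injOn
      univ_nonempty hx'
    simp only [Pi.neg_apply, neg_sub_neg, ← prod_inv_distrib] at h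
    simp only [← h, mul_comm]

end partialFractions

/-- For `n ≥ 1` and pairwise distinct `t_1,...,t_n` in a field, the sum over all
permutations `(i_1,...,i_n)` of `{1,...,n}` of
`1/((t_{i_2}-t_{i_1})(t_{i_3}-t_{i_2})⋯(t_{i_n}-t_{i_{n-1}}))` equals `0` when `n ≥ 2`
and `1` when `n = 1`. -/
theorem stmt16 {K : Type*} [Field K] (n : ℕ) (hn : 1 ≤ n) (t : Fin n → K)
    (ht : Function.Injective t) :
    ∑ σ : Equiv.Perm (Fin n), consecProd t ((List.finRange n).map σ) =
      if n = 1 then 1 else 0 := by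
  obtain _ | _ | m := n
  · omega
  · exact sum_perm_fin_one_consecProd t
  · rw [if_neg (by omega), ← Perm.decomposeFin.symm.sum_comp, Fintype.sum_prod_type]
    simp only [sum_consecProd_decomposeFin_symm_eq_nodalWeight t ht _
      (sum_perm_inv_sub_mul_consecProd m)]
    exact Lagrange.sum_nodalWeight_eq_zero (neg_injective.comp ht).injOn (by simp)
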